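/- arXiv:1301.5332 — 4 statements merged into one kernel-verified Lean document; each statement's English description precedes it below -/
import Mathlib

section
/- In the online pairwise-loss setting with ghost sample, whenever n > 2/(ε²c²), the symmetrization inequality holds: Pr_{Z^n∼𝒟^n}( (1/(n − c_n)) Σ_{t=c_n}^{n−1} [ℛ(h_{t−1}) − E_t[M_t]] ≥ ε ) ≤ 2 · Pr_{Z^n∼𝒟^n, Ξ^n∼𝒟^n}( (1/(n − c_n)) Σ_{t=c_n}^{n−1} [E_t[M̃_t] − E_t[M_t]] ≥ ε/2 ). -/
open MeasureTheory Finset Real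

noncomputable def pairLoss {X : Type*} [TopologicalSpace X] (φ : ℝ → ℝ → ℝ)
    (h : BoundedContinuousFunction (X × X) ℝ) (z z' : X × ℝ) : ℝ :=
  φ (z.2 - z'.2) (h (z.1, z'.1))

noncomputable def risk {X : Type*} [TopologicalSpace X] [MeasurableSpace X]
    (D : Measure (X × ℝ)) (φ : ℝ → ℝ → ℝ)
    (h : BoundedContinuousFunction (X × X) ℝ) : ℝ :=
  ∫ z, ∫ z', pairLoss φ h z z' ∂D ∂D

noncomputable def samp {n : ℕ} [NeZero n] {α : Type*} (ω : Fin n → α) (i : ℕ) : α :=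
  ω (Fin.ofNat n (i - 1))

/-- `E_t[M_t]`: the conditional expectation over `z_t` (given `z₁,…,z_{t−1}`) of
`M_t = (1/(t−1)) Σ_{i=1}^{t−1} ℓ(h_{t−1}, z_t, z_i)`. -/
noncomputable def EtMt {X : Type*} [TopologicalSpace X] [MeasurableSpace X]
    (D : Measure (X × ℝ)) {n : ℕ} [NeZero n] (φ : ℝ → ℝ → ℝ)
    (hyp : ℕ → (Fin n → X × ℝ) → BoundedContinuousFunction (X × X) ℝ)
    (t : ℕ) (ω : Fin n → X × ℝ) : ℝ :=
  ∫ z, (1 / ((t : ℝ) - 1)) *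
    ∑ i ∈ Icc 1 (t - 1), pairLoss φ (hyp (t - 1) ω) z (samp ω i) ∂D

/-- `E_t[M̃_t]`: the conditional expectation over `z_t` of the ghost-sample statistic
`M̃_t = (1/(t−1)) Σ_{j=1}^{t−1} ℓ(h_{t−1}, z_t, ξ_j)`. -/
noncomputable def EtMtGhost {X : Type*} [TopologicalSpace X] [MeasurableSpace X]
    (D : Measure (X × ℝ)) {n : ℕ} [NeZero n] (φ : ℝ → ℝ → ℝ)
    (hyp : ℕ → (Fin n → X × ℝ) → BoundedContinuousFunction (X × X) ℝ)
    (t : ℕ) (ω ξ : Fin n → X × ℝ) : ℝ :=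
  ∫ z, (1 / ((t : ℝ) - 1)) *
    ∑ j ∈ Icc 1 (t - 1), pairLoss φ (hyp (t - 1) ω) z (samp ξ j) ∂D

/-!
Fix the sample `ω` and view the ghost average `G ξ = (1 / (n - c_n)) Σ_t E_t[M̃_t]` as a function
of the ghost sample alone. Exchanging the two sums writes it as `Σ_i W_i (ξ_i)`, a sum of
independent bounded terms; its mean is the average risk and, by Popoviciu's inequality, its
variance is at most `1 / (4 (c_n - 1)) ≤ (ε / 2) ^ 2` as soon as `n > 2 / (ε² c²)`. A one-sided
Chebyshev bound then keeps `G` above the average risk minus `ε / 2` with probability at least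
`1 / 2`, so for every `ω` in the event on the left the ghost samples completing it to the event on
the right have measure at least `1 / 2`; integrating over `ω` gives the factor `2`. For `ε > 1`
the event on the left is empty, since the average of `ℛ(h_{t-1}) - E_t[M_t]` is at most `1`.
-/
open ProbabilityTheory
open scoped ENNReal

lemma half_le_measure_sub_le_of_variance_le {Ω : Type*} [MeasurableSpace Ω] {μ : Measure Ω}
    [IsProbabilityMeasure μ] {T : Ω → ℝ} (hT : MemLp T 2 μ) {a : ℝ} (ha : 0 < a)
    (hvar : Var[T; μ] ≤ a ^ 2) :
    1 / 2 ≤ μ {ω | μ[T] - a ≤ T ω} := by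
  set m := μ[T]
  set Y : Ω → ℝ := fun ω => T ω - (m + a)
  have hY : MemLp Y 2 μ := hT.sub (memLp_const _)
  have hY_mean : μ[Y] = -a := by
    simp only [Y, integral_sub (hT.integrable one_le_two) (integrable_const _), integral_const,
      probReal_univ, one_smul, m]
    ring
  have hY_sq : ∫ ω, Y ω ^ 2 ∂μ ≤ 2 * a ^ 2 := by
    have := variance_eq_sub hY
    rw [variance_sub_const hT.aestronglyMeasurable, hY_mean] at this
    simp only [Pi.pow_apply] at this
    nlinarith
  -- Markov for `Y ^ 2`, whose mean is `Var[T] + a ^ 2 ≤ 2 a ^ 2`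
  have h_tail : μ.real {ω | T ω < m - a} ≤ 1 / 2 := by
    have hsub : {ω | T ω < m - a} ⊆ {ω | 4 * a ^ 2 ≤ Y ω ^ 2} := fun ω hω => by
      simp only [Set.mem_ofPred_eq, Y] at hω ⊢
      nlinarith
    have hmarkov := mul_meas_ge_le_integral_of_nonneg (ae_of_all _ fun ω => sq_nonneg (Y ω))
      hY.integrable_sq (4 * a ^ 2)
    refine le_of_mul_le_mul_left ?_ (by positivity : 0 < 4 * a ^ 2)
    calc 4 * a ^ 2 * μ.real {ω | T ω < m - a}
        ≤ 4 * a ^ 2 * μ.real {ω | 4 * a ^ 2 ≤ Y ω ^ 2} := by gcongr; exact measure_ne_top μ _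
      _ ≤ 4 * a ^ 2 * (1 / 2) := by linarith
  have hnull : NullMeasurableSet {ω | m - a ≤ T ω} μ :=
    nullMeasurableSet_le aemeasurable_const hT.aemeasurable
  have hcompl : {ω | m - a ≤ T ω}ᶜ = {ω | T ω < m - a} := by ext; simp [lt_sub_iff_add_lt]
  have hreal : 1 / 2 ≤ μ.real {ω | m - a ≤ T ω} := by
    have := probReal_compl_eq_one_sub₀ hnull
    rw [hcompl] at this
    linarith
  rw [← ENNReal.ofReal_toReal (measure_ne_top μ _)]
  calc (1 / 2 : ℝ≥0∞) = ENNReal.ofReal (1 / 2) := by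
        rw [ENNReal.ofReal_div_of_pos two_pos]; simp
    _ ≤ _ := ENNReal.ofReal_le_ofReal hreal

lemma measure_le_two_mul_prod_of_half_le_measure_prodMk_preimage {α β : Type*}
    [MeasurableSpace α] [MeasurableSpace β] {μ : Measure α} {ν : Measure β} [SFinite ν]
    {A : Set α} {B : Set (α × β)} (h : ∀ x ∈ A, 1 / 2 ≤ ν (Prod.mk x ⁻¹' B)) :
    μ A ≤ 2 * μ.prod ν B := by
  set B' := toMeasurable (μ.prod ν) B
  have hB' : MeasurableSet B' := measurableSet_toMeasurable _ _
  calc μ A ≤ μ {x | 1 / 2 ≤ ν (Prod.mk x ⁻¹' B')} :=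
        measure_mono fun x hx =>
          (h x hx).trans (measure_mono (Set.preimage_mono (subset_toMeasurable _ _)))
    _ ≤ (∫⁻ x, ν (Prod.mk x ⁻¹' B') ∂μ) / (1 / 2) :=
        meas_ge_le_lintegral_div (measurable_measure_prodMk_left hB').aemeasurable
          (by norm_num) (by norm_num)
    _ = 2 * μ.prod ν B := by
        rw [← Measure.prod_apply hB', measure_toMeasurable, one_div, ENNReal.div_eq_inv_mul,
          inv_inv, mul_comm]

lemma variance_sum_comp_eval_le {ι : Type*} [Fintype ι] {Ω : ι → Type*}
    [∀ i, MeasurableSpace (Ω i)] {μ : (i : ι) → Measure (Ω i)} [∀ i, IsProbabilityMeasure (μ i)]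
    {W : (i : ι) → Ω i → ℝ} {a : ι → ℝ} (hW : ∀ i, Measurable (W i))
    (hWa : ∀ i z, W i z ∈ Set.Icc 0 (a i)) :
    Var[fun ξ => ∑ i, W i (ξ i); Measure.pi μ] ≤ ∑ i, a i ^ 2 / 4 := by
  have hmem : ∀ i, MemLp (W i) 2 (μ i) := fun i =>
    memLp_of_bounded (ae_of_all _ (hWa i)) (hW i).aestronglyMeasurable 2
  have h := variance_sum_pi hmem
  simp only [sum_fn] at h
  rw [h]
  gcongr with i
  calc Var[W i; μ i] ≤ ((a i - 0) / 2) ^ 2 :=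
        variance_le_sq_of_bounded (ae_of_all _ (hWa i)) (hW i).aemeasurable
    _ = a i ^ 2 / 4 := by ring

def weightedCoordSum {Z ι τ : Type*} (I : Finset τ) (S : τ → Finset ι) (w : τ → ℝ)
    (f : τ → Z → ℝ) (ξ : ι → Z) : ℝ :=
  ∑ t ∈ I, w t * ∑ i ∈ S t, f t (ξ i)

section WeightedCoordSum

variable {Z ι τ : Type*} [MeasurableSpace Z] {μ : Measure Z} [IsProbabilityMeasure μ] [Fintype ι]
  {I : Finset τ} {S : τ → Finset ι} {w : τ → ℝ} {f : τ → Z → ℝ}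

lemma memLp_weightedCoordSum {p : ℝ≥0∞} (hf : ∀ t ∈ I, MemLp (f t) p μ) :
    MemLp (weightedCoordSum I S w f) p (Measure.pi fun _ : ι => μ) :=
  memLp_finsetSum I fun t ht => (memLp_finsetSum (S t) fun i _ =>
    (hf t ht).comp_measurePreserving (measurePreserving_eval _ i)).const_mul (w t)

lemma integral_weightedCoordSum (hf : ∀ t ∈ I, Integrable (f t) μ) :
    ∫ ξ, weightedCoordSum I S w f ξ ∂(Measure.pi fun _ : ι => μ) =
      ∑ t ∈ I, w t * #(S t) * ∫ z, f t z ∂μ := by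
  have hcomp : ∀ t ∈ I, ∀ i : ι,
      Integrable (fun ξ : ι → Z => f t (ξ i)) (Measure.pi fun _ : ι => μ) :=
    fun t ht i => integrable_comp_eval (hf t ht)
  unfold weightedCoordSum
  rw [integral_finsetSum I fun t ht => (integrable_finsetSum _ fun i _ => hcomp t ht i).const_mul _]
  refine sum_congr rfl fun t ht => ?_
  rw [integral_const_mul, integral_finsetSum _ fun i _ => hcomp t ht i]
  rw [sum_congr rfl fun i _ =>
    integral_comp_eval (μ := fun _ : ι => μ) (i := i) (hf t ht).aestronglyMeasurable,
    sum_const, nsmul_eq_mul, mul_assoc]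

lemma variance_weightedCoordSum_le (hw : ∀ t ∈ I, 0 ≤ w t) (hf : ∀ t ∈ I, Measurable (f t))
    (hf01 : ∀ t ∈ I, ∀ z, f t z ∈ Set.Icc 0 1) :
    Var[weightedCoordSum I S w f; Measure.pi fun _ : ι => μ] ≤
      (∑ t ∈ I, w t) * (∑ t ∈ I, w t * #(S t)) / 4 := by
  classical
  set a : ι → ℝ := fun i => ∑ t ∈ I, if i ∈ S t then w t else 0
  set W : ι → Z → ℝ := fun i z => ∑ t ∈ I, if i ∈ S t then w t * f t z else 0
  have hsum : weightedCoordSum I S w f = fun ξ => ∑ i, W i (ξ i) := by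
    funext ξ
    simp only [weightedCoordSum, W]
    rw [sum_comm]
    refine sum_congr rfl fun t _ => ?_
    rw [mul_sum, ← sum_filter, filter_mem_eq_inter, univ_inter]
  have hWa : ∀ i z, W i z ∈ Set.Icc 0 (a i) := fun i z => by
    constructor
    · refine sum_nonneg fun t ht => ?_
      split_ifs
      · exact mul_nonneg (hw t ht) (hf01 t ht z).1
      · exact le_rfl
    · refine sum_le_sum fun t ht => ?_
      split_ifs
      · exact mul_le_of_le_one_right (hw t ht) (hf01 t ht z).2
      · exact le_rfl
  have ha0 : ∀ i, 0 ≤ a i := fun i =>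
    sum_nonneg fun t ht => by split_ifs <;> simp [hw t ht]
  have ha_le : ∀ i, a i ≤ ∑ t ∈ I, w t := fun i =>
    sum_le_sum fun t ht => by split_ifs <;> simp [hw t ht]
  have ha_sum : ∑ i, a i = ∑ t ∈ I, w t * #(S t) := by
    simp only [a]
    rw [sum_comm]
    refine sum_congr rfl fun t _ => ?_
    rw [← sum_filter, filter_mem_eq_inter, univ_inter, sum_const,
      nsmul_eq_mul, mul_comm]
  rw [hsum]
  calc Var[fun ξ => ∑ i, W i (ξ i); Measure.pi fun _ : ι => μ] ≤ ∑ i, a i ^ 2 / 4 :=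
        variance_sum_comp_eval_le (fun i => measurable_sum I fun t ht => by
          split_ifs
          · exact (hf t ht).const_mul _
          · exact measurable_const) hWa
    _ ≤ ∑ i, (∑ t ∈ I, w t) * a i / 4 := by
        gcongr with i
        rw [sq]
        exact mul_le_mul_of_nonneg_right (ha_le i) (ha0 i)
    _ = (∑ t ∈ I, w t) * (∑ t ∈ I, w t * #(S t)) / 4 := by
        rw [← ha_sum, mul_sum, sum_div]

end WeightedCoordSum

lemma integral_mem_Icc_zero_one {α : Type*} [MeasurableSpace α] {μ : Measure α}
    [IsProbabilityMeasure μ] {f : α → ℝ} (hf : ∀ x, f x ∈ Set.Icc 0 1) :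
    ∫ x, f x ∂μ ∈ Set.Icc (0 : ℝ) 1 :=
  ⟨integral_nonneg fun x => (hf x).1,
    (integral_mono_of_nonneg (ae_of_all _ fun x => (hf x).1) (integrable_const 1)
      (ae_of_all _ fun x => (hf x).2)).trans (by simp)⟩

lemma injOn_ofNat_sub_one (n : ℕ) [NeZero n] :
    Set.InjOn (fun j : ℕ => Fin.ofNat n (j - 1)) (Set.Icc 1 n) := by
  intro x hx y hy hxy
  have := congrArg Fin.val hxy
  simp only [Fin.val_ofNat] at this
  rw [Nat.mod_eq_of_lt (by grind), Nat.mod_eq_of_lt (by grind)] at this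
  grind

def pastIndices (n : ℕ) [NeZero n] (t : ℕ) : Finset (Fin n) :=
  (Icc 1 (t - 1)).image fun j => Fin.ofNat n (j - 1)

lemma card_pastIndices {n : ℕ} [NeZero n] {t : ℕ} (ht : t ≤ n + 1) :
    #(pastIndices n t) = t - 1 := by
  rw [pastIndices, card_image_of_injOn, Nat.card_Icc, Nat.add_sub_cancel]
  exact (injOn_ofNat_sub_one n).mono fun j hj => by simp at hj ⊢; omega

lemma sum_samp_eq_sum_pastIndices {α : Type*} {n : ℕ} [NeZero n] {t : ℕ} (ht : t ≤ n + 1)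
    (ξ : Fin n → α) (g : α → ℝ) :
    ∑ j ∈ Icc 1 (t - 1), g (samp ξ j) = ∑ i ∈ pastIndices n t, g (ξ i) := by
  rw [pastIndices, sum_image]
  · rfl
  · exact fun x hx y hy => injOn_ofNat_sub_one n (by simp at hx ⊢; omega) (by simp at hy ⊢; omega)

lemma one_div_sub_mul_card_Icc_le_one {cn n : ℕ} (hcn1 : 1 ≤ cn) (hcn : cn ≤ n) :
    1 / ((n : ℝ) - cn) * #(Icc cn (n - 1)) ≤ 1 := by
  rw [Nat.card_Icc, show n - 1 + 1 - cn = n - cn by omega, Nat.cast_sub hcn]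
  rcases eq_or_ne ((n : ℝ) - cn) 0 with h | h
  · simp [h]
  · rw [one_div_mul_cancel h]

lemma sum_one_div_sub_mul_one_div_sub_one_le {cn n : ℕ} (hcn2 : 2 ≤ cn) (hcn : cn ≤ n) :
    ∑ t ∈ Icc cn (n - 1), 1 / ((n : ℝ) - cn) * (1 / ((t : ℝ) - 1)) ≤ 1 / ((cn : ℝ) - 1) := by
  have hb : 0 ≤ 1 / ((n : ℝ) - cn) := by rw [one_div_nonneg, sub_nonneg]; exact_mod_cast hcn
  have hcn1 : (1 : ℝ) < cn := by exact_mod_cast hcn2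
  calc ∑ t ∈ Icc cn (n - 1), 1 / ((n : ℝ) - cn) * (1 / ((t : ℝ) - 1))
      ≤ ∑ _t ∈ Icc cn (n - 1), 1 / ((n : ℝ) - cn) * (1 / ((cn : ℝ) - 1)) := by
        gcongr with t ht
        exact_mod_cast (mem_Icc.mp ht).1
    _ = 1 / ((n : ℝ) - cn) * #(Icc cn (n - 1)) * (1 / ((cn : ℝ) - 1)) := by
        rw [sum_const, nsmul_eq_mul]; ring
    _ ≤ 1 * (1 / ((cn : ℝ) - 1)) := by
        gcongr
        exact one_div_sub_mul_card_Icc_le_one (by omega) hcn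
    _ = 1 / ((cn : ℝ) - 1) := one_mul _

lemma two_le_ceil_mul_and_one_div_le_sq {c ε : ℝ} {n : ℕ} (hc0 : 0 < c) (hc1 : c ≤ 1)
    (hε : 0 < ε) (hε1 : ε ≤ 1) (hn : 2 / (ε ^ 2 * c ^ 2) < n) :
    2 ≤ ⌈c * n⌉₊ ∧ 1 / ((⌈c * n⌉₊ : ℝ) - 1) ≤ ε ^ 2 := by
  have hceil : c * n ≤ ⌈c * n⌉₊ := Nat.le_ceil _
  have h2 : 2 < ε ^ 2 * c ^ 2 * n := by rw [div_lt_iff₀ (by positivity)] at hn; linarith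
  have hεcn : 2 < ε ^ 2 * (c * n) := by nlinarith [sq_nonneg ε, sq_nonneg c]
  have hcn : (2 : ℝ) < ⌈c * n⌉₊ := by nlinarith
  refine ⟨by exact_mod_cast hcn.le, ?_⟩
  rw [div_le_iff₀ (by linarith)]
  nlinarith

section Loss

variable {X : Type*} [TopologicalSpace X] [MeasurableSpace X] {D : Measure (X × ℝ)}
  {φ : ℝ → ℝ → ℝ}

noncomputable def partialRisk (D : Measure (X × ℝ)) (φ : ℝ → ℝ → ℝ)
    (h : BoundedContinuousFunction (X × X) ℝ) (w : X × ℝ) : ℝ :=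
  ∫ z, pairLoss φ h z w ∂D

lemma EtMt_nonneg (hφ01 : ∀ s t, φ s t ∈ Set.Icc (0 : ℝ) 1) {n : ℕ} [NeZero n]
    (hyp : ℕ → (Fin n → X × ℝ) → BoundedContinuousFunction (X × X) ℝ) {t : ℕ} (ht : 1 ≤ t)
    (ω : Fin n → X × ℝ) : 0 ≤ EtMt D φ hyp t ω := by
  have : (1 : ℝ) ≤ t := by exact_mod_cast ht
  exact integral_nonneg fun z => mul_nonneg (by rw [one_div_nonneg]; linarith)
    (sum_nonneg fun i _ => (hφ01 _ _).1)

variable [IsProbabilityMeasure D]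

lemma partialRisk_mem_Icc (hφ01 : ∀ s t, φ s t ∈ Set.Icc (0 : ℝ) 1)
    (h : BoundedContinuousFunction (X × X) ℝ) (w : X × ℝ) :
    partialRisk D φ h w ∈ Set.Icc (0 : ℝ) 1 :=
  integral_mem_Icc_zero_one fun _ => hφ01 _ _

lemma risk_mem_Icc (hφ01 : ∀ s t, φ s t ∈ Set.Icc (0 : ℝ) 1)
    (h : BoundedContinuousFunction (X × X) ℝ) : risk D φ h ∈ Set.Icc (0 : ℝ) 1 :=
  integral_mem_Icc_zero_one fun _ => integral_mem_Icc_zero_one fun _ => hφ01 _ _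

variable [OpensMeasurableSpace X] [SecondCountableTopology X]

lemma measurable_pairLoss (hφmeas : Measurable (Function.uncurry φ))
    (h : BoundedContinuousFunction (X × X) ℝ) :
    Measurable fun p : (X × ℝ) × (X × ℝ) => pairLoss φ h p.1 p.2 :=
  hφmeas.comp ((measurable_fst.snd.sub measurable_snd.snd).prodMk
    (h.continuous.measurable.comp (measurable_fst.fst.prodMk measurable_snd.fst)))

lemma measurable_partialRisk (hφmeas : Measurable (Function.uncurry φ))
    (h : BoundedContinuousFunction (X × X) ℝ) : Measurable (partialRisk D φ h) :=
  ((measurable_pairLoss hφmeas h).comp measurable_swap).stronglyMeasurable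
    |>.integral_prod_right'.measurable

lemma integral_partialRisk (hφ01 : ∀ s t, φ s t ∈ Set.Icc (0 : ℝ) 1)
    (hφmeas : Measurable (Function.uncurry φ)) (h : BoundedContinuousFunction (X × X) ℝ) :
    ∫ w, partialRisk D φ h w ∂D = risk D φ h :=
  integral_integral_swap <| Integrable.of_mem_Icc 0 1
    ((measurable_pairLoss hφmeas h).comp measurable_swap).aemeasurable
    (ae_of_all _ fun _ => hφ01 _ _)

lemma EtMtGhost_eq (hφ01 : ∀ s t, φ s t ∈ Set.Icc (0 : ℝ) 1)
    (hφmeas : Measurable (Function.uncurry φ)) {n : ℕ} [NeZero n]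
    (hyp : ℕ → (Fin n → X × ℝ) → BoundedContinuousFunction (X × X) ℝ) (t : ℕ)
    (ω ξ : Fin n → X × ℝ) :
    EtMtGhost D φ hyp t ω ξ =
      1 / ((t : ℝ) - 1) * ∑ j ∈ Icc 1 (t - 1), partialRisk D φ (hyp (t - 1) ω) (samp ξ j) := by
  rw [EtMtGhost, integral_const_mul, integral_finsetSum]
  · rfl
  · exact fun j _ => Integrable.of_mem_Icc 0 1
      ((measurable_pairLoss hφmeas _).comp (measurable_id.prodMk measurable_const)).aemeasurable
      (ae_of_all _ fun _ => hφ01 _ _)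

end Loss

section Symmetrization

variable {X : Type*} [TopologicalSpace X] [MeasurableSpace X] {D : Measure (X × ℝ)}
  [IsProbabilityMeasure D] {φ : ℝ → ℝ → ℝ} {n : ℕ} [NeZero n]

lemma average_risk_sub_EtMt_le_one (hφ01 : ∀ s t, φ s t ∈ Set.Icc (0 : ℝ) 1)
    (hyp : ℕ → (Fin n → X × ℝ) → BoundedContinuousFunction (X × X) ℝ) {cn : ℕ} (hcn1 : 1 ≤ cn)
    (hcn : cn ≤ n) (ω : Fin n → X × ℝ) :
    1 / ((n : ℝ) - cn) * ∑ t ∈ Icc cn (n - 1), (risk D φ (hyp (t - 1) ω) - EtMt D φ hyp t ω)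
      ≤ 1 := by
  have hb : 0 ≤ 1 / ((n : ℝ) - cn) := by
    rw [one_div_nonneg, sub_nonneg]; exact_mod_cast hcn
  calc 1 / ((n : ℝ) - cn) * ∑ t ∈ Icc cn (n - 1), (risk D φ (hyp (t - 1) ω) - EtMt D φ hyp t ω)
      ≤ 1 / ((n : ℝ) - cn) * ∑ _t ∈ Icc cn (n - 1), (1 : ℝ) := by
        gcongr with t ht
        linarith [(risk_mem_Icc (D := D) hφ01 (hyp (t - 1) ω)).2,
          EtMt_nonneg (D := D) hφ01 hyp (hcn1.trans (mem_Icc.mp ht).1) ω]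
    _ ≤ 1 := by
        rw [sum_const, nsmul_one]
        exact one_div_sub_mul_card_Icc_le_one hcn1 hcn

variable [OpensMeasurableSpace X] [SecondCountableTopology X]

lemma average_EtMtGhost_eq_weightedCoordSum (hφ01 : ∀ s t, φ s t ∈ Set.Icc (0 : ℝ) 1)
    (hφmeas : Measurable (Function.uncurry φ))
    (hyp : ℕ → (Fin n → X × ℝ) → BoundedContinuousFunction (X × X) ℝ) (ω ξ : Fin n → X × ℝ)
    (cn : ℕ) :
    1 / ((n : ℝ) - cn) * ∑ t ∈ Icc cn (n - 1), EtMtGhost D φ hyp t ω ξ =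
      weightedCoordSum (Icc cn (n - 1)) (pastIndices n)
        (fun t => 1 / ((n : ℝ) - cn) * (1 / ((t : ℝ) - 1)))
        (fun t => partialRisk D φ (hyp (t - 1) ω)) ξ := by
  rw [weightedCoordSum, mul_sum]
  refine sum_congr rfl fun t ht => ?_
  rw [EtMtGhost_eq hφ01 hφmeas, sum_samp_eq_sum_pastIndices (by grind), mul_assoc]

lemma half_le_measure_average_EtMtGhost_ge (hφ01 : ∀ s t, φ s t ∈ Set.Icc (0 : ℝ) 1)
    (hφmeas : Measurable (Function.uncurry φ))
    (hyp : ℕ → (Fin n → X × ℝ) → BoundedContinuousFunction (X × X) ℝ) (ω : Fin n → X × ℝ)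
    {cn : ℕ} (hcn2 : 2 ≤ cn) (hcn : cn ≤ n) {ε : ℝ} (hε : 0 < ε)
    (hcnε : 1 / ((cn : ℝ) - 1) ≤ ε ^ 2) :
    1 / 2 ≤ (Measure.pi fun _ : Fin n => D)
      {ξ | 1 / ((n : ℝ) - cn) * ∑ t ∈ Icc cn (n - 1), risk D φ (hyp (t - 1) ω) - ε / 2 ≤
        1 / ((n : ℝ) - cn) * ∑ t ∈ Icc cn (n - 1), EtMtGhost D φ hyp t ω ξ} := by
  simp only [average_EtMtGhost_eq_weightedCoordSum hφ01 hφmeas hyp ω _ cn]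
  set b : ℝ := 1 / ((n : ℝ) - cn)
  set I : Finset ℕ := Icc cn (n - 1)
  set w : ℕ → ℝ := fun t => b * (1 / ((t : ℝ) - 1))
  set f : ℕ → X × ℝ → ℝ := fun t => partialRisk D φ (hyp (t - 1) ω)
  set G := weightedCoordSum I (pastIndices n) w f
  have hb : 0 ≤ b := by rw [one_div_nonneg, sub_nonneg]; exact_mod_cast hcn
  have hbI : b * #I ≤ 1 := one_div_sub_mul_card_Icc_le_one (by omega) hcn
  have ht1 : ∀ t ∈ I, (1 : ℝ) < t := fun t ht => by
    have := (mem_Icc.mp ht).1; exact_mod_cast (by omega : 1 < t)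
  have hw : ∀ t ∈ I, 0 ≤ w t := fun t ht =>
    mul_nonneg hb (one_div_nonneg.mpr (by linarith [ht1 t ht]))
  have hwcard : ∀ t ∈ I, w t * #(pastIndices n t) = b := fun t ht => by
    have := mem_Icc.mp ht
    rw [card_pastIndices (by omega), Nat.cast_sub (by omega), Nat.cast_one, mul_assoc,
      one_div_mul_cancel (by linarith [ht1 t ht]), mul_one]
  have hf : ∀ t ∈ I, ∀ z, f t z ∈ Set.Icc 0 1 := fun t _ => partialRisk_mem_Icc hφ01 _
  have hfmeas : ∀ t ∈ I, Measurable (f t) := fun t _ => measurable_partialRisk hφmeas _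
  have hmean : ∫ ξ, G ξ ∂(Measure.pi fun _ => D) = b * ∑ t ∈ I, risk D φ (hyp (t - 1) ω) := by
    rw [integral_weightedCoordSum fun t ht => Integrable.of_mem_Icc 0 1
      (hfmeas t ht).aemeasurable (ae_of_all _ (hf t ht)), mul_sum]
    exact sum_congr rfl fun t ht => by rw [hwcard t ht, integral_partialRisk hφ01 hφmeas]
  have hvar : Var[G; Measure.pi fun _ => D] ≤ (ε / 2) ^ 2 := by
    have hsum_w : ∑ t ∈ I, w t ≤ ε ^ 2 :=
      (sum_one_div_sub_mul_one_div_sub_one_le hcn2 hcn).trans hcnε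
    calc Var[G; Measure.pi fun _ => D]
        ≤ (∑ t ∈ I, w t) * (∑ t ∈ I, w t * #(pastIndices n t)) / 4 :=
          variance_weightedCoordSum_le hw hfmeas hf
      _ ≤ ε ^ 2 * 1 / 4 := by
          rw [sum_congr rfl hwcard, sum_const, nsmul_eq_mul, mul_comm (#I : ℝ)]
          gcongr
      _ = (ε / 2) ^ 2 := by ring
  have hmem : MemLp G 2 (Measure.pi fun _ => D) := memLp_weightedCoordSum fun t ht =>
    memLp_of_bounded (ae_of_all _ (hf t ht)) (hfmeas t ht).aestronglyMeasurable 2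
  have := half_le_measure_sub_le_of_variance_le hmem (half_pos hε) hvar
  rwa [hmean] at this

end Symmetrization

theorem stmt_1_general {X : Type*} [TopologicalSpace X] [MeasurableSpace X]
    [OpensMeasurableSpace X] [SecondCountableTopology X]
    (D : Measure (X × ℝ)) [IsProbabilityMeasure D]
    (φ : ℝ → ℝ → ℝ)
    (hφ01 : ∀ s t, φ s t ∈ Set.Icc (0 : ℝ) 1)
    (hφmeas : Measurable (Function.uncurry φ))
    (c : ℝ) (hc : c ∈ Set.Ioo (0 : ℝ) 1) (ε : ℝ) (hε : 0 < ε)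
    (n : ℕ) [NeZero n] (hn : 2 / (ε ^ 2 * c ^ 2) < (n : ℝ))
    (hyp : ℕ → (Fin n → X × ℝ) → BoundedContinuousFunction (X × X) ℝ) :
    (Measure.pi fun _ : Fin n => D)
      {ω | ε ≤ (1 / ((n : ℝ) - ⌈c * n⌉₊)) *
        ∑ t ∈ Icc (⌈c * n⌉₊) (n - 1),
          (risk D φ (hyp (t - 1) ω) - EtMt D φ hyp t ω)} ≤
    2 * ((Measure.pi fun _ : Fin n => D).prod (Measure.pi fun _ : Fin n => D))
      {p | ε / 2 ≤ (1 / ((n : ℝ) - ⌈c * n⌉₊)) *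
        ∑ t ∈ Icc (⌈c * n⌉₊) (n - 1),
          (EtMtGhost D φ hyp t p.1 p.2 - EtMt D φ hyp t p.1)} := by
  obtain ⟨hc0, hc1⟩ := hc
  have hcn1 : 1 ≤ ⌈c * n⌉₊ :=
    Nat.one_le_ceil_iff.mpr (mul_pos hc0 (Nat.cast_pos.mpr (NeZero.pos n)))
  have hcn : ⌈c * n⌉₊ ≤ n := Nat.ceil_le.mpr (mul_le_of_le_one_left (by positivity) hc1.le)
  rcases le_or_gt ε 1 with hε1 | hε1
  · obtain ⟨hcn2, hcnε⟩ := two_le_ceil_mul_and_one_div_le_sq hc0 hc1.le hε hε1 hn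
    refine measure_le_two_mul_prod_of_half_le_measure_prodMk_preimage fun ω hω => ?_
    refine (half_le_measure_average_EtMtGhost_ge hφ01 hφmeas hyp ω hcn2 hcn hε hcnε).trans
      (measure_mono fun ξ hξ => ?_)
    simp only [Set.mem_ofPred_eq, Set.mem_preimage, sum_sub_distrib, mul_sub] at hω hξ ⊢
    linarith
  · have hempty : {ω : Fin n → X × ℝ | ε ≤ (1 / ((n : ℝ) - ⌈c * n⌉₊)) *
        ∑ t ∈ Icc (⌈c * n⌉₊) (n - 1), (risk D φ (hyp (t - 1) ω) - EtMt D φ hyp t ω)} = ∅ :=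
      Set.eq_empty_of_forall_notMem fun ω hω =>
        (hε1.trans_le hω).not_ge (average_risk_sub_EtMt_le_one hφ01 hyp hcn1 hcn ω)
    rw [hempty, measure_empty]
    positivity

theorem stmt_1 {X : Type*} [TopologicalSpace X] [MeasurableSpace X]
    [OpensMeasurableSpace X] [SecondCountableTopology X]
    (D : Measure (X × ℝ)) [IsProbabilityMeasure D]
    (H : Set (BoundedContinuousFunction (X × X) ℝ)) (hH : IsCompact H)
    (φ : ℝ → ℝ → ℝ) (L : NNReal)
    (hφ01 : ∀ s t, φ s t ∈ Set.Icc (0 : ℝ) 1)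
    (hφlip : ∀ s, LipschitzWith L (φ s))
    (hφmeas : Measurable (Function.uncurry φ))
    (c : ℝ) (hc : c ∈ Set.Ioo (0 : ℝ) 1) (ε : ℝ) (hε : 0 < ε)
    (n : ℕ) [NeZero n] (hn : 2 / (ε ^ 2 * c ^ 2) < (n : ℝ))
    (hyp : ℕ → (Fin n → X × ℝ) → BoundedContinuousFunction (X × X) ℝ)
    (hhypH : ∀ t ω, hyp t ω ∈ H)
    (hpre : ∀ t (ω ω' : Fin n → X × ℝ),
      (∀ i : Fin n, (i : ℕ) < t → ω i = ω' i) → hyp t ω = hyp t ω') :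
    (Measure.pi fun _ : Fin n => D)
      {ω | ε ≤ (1 / ((n : ℝ) - ⌈c * n⌉₊)) *
        ∑ t ∈ Icc (⌈c * n⌉₊) (n - 1),
          (risk D φ (hyp (t - 1) ω) - EtMt D φ hyp t ω)} ≤
    2 * ((Measure.pi fun _ : Fin n => D).prod (Measure.pi fun _ : Fin n => D))
      {p | ε / 2 ≤ (1 / ((n : ℝ) - ⌈c * n⌉₊)) *
        ∑ t ∈ Icc (⌈c * n⌉₊) (n - 1),
          (EtMtGhost D φ hyp t p.1 p.2 - EtMt D φ hyp t p.1)} :=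
  stmt_1_general D φ hφ01 hφmeas c hc ε hε n hn hyp
end

section
/- Let (x_t, y_t) ∈ ℝ^d × {−1,+1}, t = 1,…,n, be an arbitrary sequence with max_t ‖x_t‖ ≤ R, and let u be any unit vector and γ > 0. Run the infinite-buffer online AUC maximization algorithm: w₀ = 0 and w_t = w_{t−1} + (1/(t−1)) Σ_{j=1}^{t−1} ℓ_j^t · y_t (x_t − x_j), where ℓ_j^t = min( [1 − ⟨w_{t−1}, y_t(x_t − x_j)⟩]₊ , 1 ) if y_t ≠ y_j and ℓ_j^t = 0 if y_t = y_j. Define M = Σ_{t=2}^n (1/(t−1)) Σ_{j=1}^{t−1} ℓ_j^t and M* = Σ_{t=2}^n (1/(t−1)) Σ_{j=1}^{t−1} ℓ̂_j^t(u) where ℓ̂_j^t(u) = 𝟙[y_t ≠ y_j] · [γ − ⟨u, (1/2)(y_t − y_j)(x_t − x_j)⟩]₊. Then M ≤ ( (√(4R² + 2) + √(γ M*)) / γ )². In particular if the data is linearly separable with margin γ (M* = 0) then M ≤ (4R² + 2)/γ². -/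
open Finset Real
open scoped RealInnerProductSpace

/-- The bounded hinge pairwise loss `ℓ_j^t` of the OAM iterate `w_{t−1}` on the pair
`(z_t, z_j)`: `min([1 − ⟨w_{t−1}, y_t(x_t − x_j)⟩]₊, 1)` when `y_t ≠ y_j`, and `0` otherwise. -/
noncomputable def oamLoss {d : ℕ} (w : ℕ → EuclideanSpace ℝ (Fin d))
    (x : ℕ → EuclideanSpace ℝ (Fin d)) (y : ℕ → ℝ) (t j : ℕ) : ℝ :=
  if y t = y j then 0
  else min (max (1 - ⟪w (t - 1), (y t) • (x t - x j)⟫) 0) 1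

/-- The hinge loss with margin `γ` of the unit vector `u` on the pair `(z_t, z_j)`:
`𝟙[y_t ≠ y_j]·[γ − ⟨u, (1/2)(y_t − y_j)(x_t − x_j)⟩]₊`. -/
noncomputable def hingeLoss {d : ℕ} (u : EuclideanSpace ℝ (Fin d)) (γ : ℝ)
    (x : ℕ → EuclideanSpace ℝ (Fin d)) (y : ℕ → ℝ) (t j : ℕ) : ℝ :=
  if y t = y j then 0
  else max (γ - ⟪u, ((y t - y j) / 2) • (x t - x j)⟫) 0

lemma oamLoss_nonneg {d : ℕ} (w x : ℕ → EuclideanSpace ℝ (Fin d)) (y : ℕ → ℝ) (t j : ℕ) :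
    0 ≤ oamLoss w x y t j := by
  unfold oamLoss; split
  · exact le_refl 0
  · exact le_min (le_max_right _ _) zero_le_one

lemma oamLoss_le_one {d : ℕ} (w x : ℕ → EuclideanSpace ℝ (Fin d)) (y : ℕ → ℝ) (t j : ℕ) :
    oamLoss w x y t j ≤ 1 := by
  unfold oamLoss; split
  · exact zero_le_one
  · exact min_le_right _ _

lemma hingeLoss_nonneg {d : ℕ} (u : EuclideanSpace ℝ (Fin d)) (γ : ℝ)
    (x : ℕ → EuclideanSpace ℝ (Fin d)) (y : ℕ → ℝ) (t j : ℕ) :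
    0 ≤ hingeLoss u γ x y t j := by
  unfold hingeLoss; split
  · exact le_refl 0
  · exact le_max_right _ _

set_option maxHeartbeats 1600000 in
lemma step_bound {d : ℕ} (R γ : ℝ)
    (x : ℕ → EuclideanSpace ℝ (Fin d)) (y : ℕ → ℝ)
    (hy : ∀ t, y t = 1 ∨ y t = -1)
    (u : EuclideanSpace ℝ (Fin d))
    (w : ℕ → EuclideanSpace ℝ (Fin d))
    (t : ℕ) (ht : 2 ≤ t)
    (hRt : ∀ j, 1 ≤ j → j ≤ t → ‖x j‖ ≤ R)
    (hupd_t : w t = w (t - 1) + (1 / ((t : ℝ) - 1)) •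
        ∑ j ∈ Icc 1 (t - 1), oamLoss w x y t j • ((y t) • (x t - x j))) :
    γ * ((1 / ((t : ℝ) - 1)) * ∑ j ∈ Icc 1 (t - 1), oamLoss w x y t j)
      - (1 / ((t : ℝ) - 1)) * ∑ j ∈ Icc 1 (t - 1), hingeLoss u γ x y t j
      ≤ ⟪u, w t⟫ - ⟪u, w (t - 1)⟫ ∧
    ‖w t‖ ^ 2 - ‖w (t - 1)‖ ^ 2 ≤
      (4 * R ^ 2 + 2) * ((1 / ((t : ℝ) - 1)) * ∑ j ∈ Icc 1 (t - 1), oamLoss w x y t j) := by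
  set m := t - 1 with hmdef
  have htm : t = m + 1 := by omega
  have hm1 : 1 ≤ m := by omega
  have hmR : ((t : ℝ) - 1) = (m : ℝ) := by rw [htm]; push_cast; ring
  have hmpos : (0 : ℝ) < (m : ℝ) := by exact_mod_cast hm1
  set c : ℝ := 1 / ((t : ℝ) - 1) with hcdef
  have hc : 0 < c := by rw [hcdef, hmR]; positivity
  have hcm : c * (m : ℝ) = 1 := by rw [hcdef, hmR]; field_simp
  set ℓ : ℕ → ℝ := fun j => oamLoss w x y t j with hldef
  set v : ℕ → EuclideanSpace ℝ (Fin d) := fun j => (y t) • (x t - x j) with hvdef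
  have hl0 : ∀ j, 0 ≤ ℓ j := fun j => oamLoss_nonneg w x y t j
  have hl1 : ∀ j, ℓ j ≤ 1 := fun j => oamLoss_le_one w x y t j
  have hR0 : 0 ≤ R := le_trans (norm_nonneg _) (hRt t (by omega) le_rfl)
  have hv2R : ∀ j ∈ Icc 1 m, ‖v j‖ ≤ 2 * R := by
    intro j hj
    rw [mem_Icc] at hj
    have hn : ‖v j‖ = ‖x t - x j‖ := by
      rw [hvdef]; simp only [norm_smul, Real.norm_eq_abs]
      rcases hy t with h | h <;> rw [h] <;> norm_num
    rw [hn]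
    calc ‖x t - x j‖ ≤ ‖x t‖ + ‖x j‖ := norm_sub_le _ _
      _ ≤ R + R := add_le_add (hRt t (by omega) le_rfl) (hRt j hj.1 (by omega))
      _ = 2 * R := by ring
  -- per-pair inequality for the margin direction u
  have hA : ∀ j, γ * ℓ j - hingeLoss u γ x y t j ≤ ℓ j * ⟪u, v j⟫ := by
    intro j
    by_cases hyj : y t = y j
    · simp [hldef, oamLoss, hingeLoss, hyj]
    · have hyy : (y t - y j) / 2 = y t := by
        rcases hy t with h1 | h1 <;> rcases hy j with h2 | h2 <;> rw [h1, h2] <;>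
          first
          | (exfalso; exact hyj (h1.trans h2.symm))
          | norm_num
      have hhinge : hingeLoss u γ x y t j = max (γ - ⟪u, v j⟫) 0 := by
        rw [hingeLoss, if_neg hyj, hyy]
      have h1 : γ - ⟪u, v j⟫ ≤ hingeLoss u γ x y t j := by
        rw [hhinge]; exact le_max_left _ _
      have h2 : 0 ≤ hingeLoss u γ x y t j := hingeLoss_nonneg _ _ _ _ _ _
      nlinarith [mul_nonneg (hl0 j) (by linarith : 0 ≤ ⟪u, v j⟫ - γ + hingeLoss u γ x y t j),
        mul_nonneg (by linarith [hl1 j] : 0 ≤ 1 - ℓ j) h2]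
  -- per-pair inequality for the iterate
  have hB : ∀ j, ℓ j * ⟪w m, v j⟫ ≤ ℓ j := by
    intro j
    by_cases hyj : y t = y j
    · simp [hldef, oamLoss, hyj]
    · have hle : ℓ j = min (max (1 - ⟪w m, v j⟫) 0) 1 := by
        rw [hldef]; simp only; rw [oamLoss, if_neg hyj]
      set b := ⟪w m, v j⟫ with hbdef
      rcases le_total 1 b with h1 | h1
      · have : max (1 - b) 0 = 0 := max_eq_right (by linarith)
        rw [hle, this]; norm_num
      · rcases le_total b 0 with h0 | h0
        · have hmax : max (1 - b) 0 = 1 - b := max_eq_left (by linarith)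
          have hmin : min (1 - b) 1 = 1 := min_eq_right (by linarith)
          rw [hle, hmax, hmin]; linarith
        · have hmax : max (1 - b) 0 = 1 - b := max_eq_left (by linarith)
          have hmin : min (1 - b) 1 = 1 - b := min_eq_left (by linarith)
          rw [hle, hmax, hmin]; nlinarith
  set X : ℝ := ∑ j ∈ Icc 1 m, ℓ j with hXdef
  have hX0 : 0 ≤ X := sum_nonneg fun j _ => hl0 j
  have hXm : X ≤ (m : ℝ) := by
    calc X ≤ ∑ j ∈ Icc 1 m, (1 : ℝ) := sum_le_sum fun j _ => hl1 j
      _ = (m : ℝ) := by rw [sum_const, Nat.card_Icc]; simp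
  have hupd' : w t = w m + c • ∑ j ∈ Icc 1 m, ℓ j • v j := hupd_t
  clear_value m c ℓ v X
  constructor
  · -- inner product with u
    have hiu : ⟪u, ∑ j ∈ Icc 1 m, ℓ j • v j⟫ = ∑ j ∈ Icc 1 m, ℓ j * ⟪u, v j⟫ := by
      rw [inner_sum]
      exact sum_congr rfl fun j _ => real_inner_smul_right _ _ _
    have hwt : ⟪u, w t⟫ = ⟪u, w m⟫ + c * ∑ j ∈ Icc 1 m, ℓ j * ⟪u, v j⟫ := by
      rw [hupd', inner_add_right, real_inner_smul_right, hiu]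
    have hsum : ∑ j ∈ Icc 1 m, (γ * ℓ j - hingeLoss u γ x y t j)
        ≤ ∑ j ∈ Icc 1 m, ℓ j * ⟪u, v j⟫ := sum_le_sum fun j _ => hA j
    have hsum2 : ∑ j ∈ Icc 1 m, (γ * ℓ j - hingeLoss u γ x y t j)
        = γ * X - ∑ j ∈ Icc 1 m, hingeLoss u γ x y t j := by
      rw [hXdef, mul_sum, sum_sub_distrib]
    rw [hsum2] at hsum
    have := mul_le_mul_of_nonneg_left hsum hc.le
    rw [hwt]
    nlinarith [this]
  · -- norm bound
    have hbound : ∑ j ∈ Icc 1 m, ℓ j * ⟪w m, v j⟫ ≤ X := by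
      rw [hXdef]; exact sum_le_sum fun j _ => hB j
    have hiw : ⟪w m, ∑ j ∈ Icc 1 m, ℓ j • v j⟫
        = ∑ j ∈ Icc 1 m, ℓ j * ⟪w m, v j⟫ := by
      rw [inner_sum]
      exact sum_congr rfl fun j _ => real_inner_smul_right _ _ _
    have hSv : ‖∑ j ∈ Icc 1 m, ℓ j • v j‖ ≤ 2 * R * X := by
      calc ‖∑ j ∈ Icc 1 m, ℓ j • v j‖ ≤ ∑ j ∈ Icc 1 m, ‖ℓ j • v j‖ := norm_sum_le _ _
        _ ≤ ∑ j ∈ Icc 1 m, ℓ j * (2 * R) := by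
            refine sum_le_sum fun j hj => ?_
            rw [norm_smul, Real.norm_eq_abs, abs_of_nonneg (hl0 j)]
            exact mul_le_mul_of_nonneg_left (hv2R j hj) (hl0 j)
        _ = 2 * R * X := by rw [hXdef, ← sum_mul]; ring
    have hDelta : ‖c • ∑ j ∈ Icc 1 m, ℓ j • v j‖ ≤ c * (2 * R * X) := by
      rw [norm_smul, Real.norm_eq_abs, abs_of_nonneg hc.le]
      exact mul_le_mul_of_nonneg_left hSv hc.le
    have hDelta2 : ‖c • ∑ j ∈ Icc 1 m, ℓ j • v j‖ ^ 2 ≤ (c * (2 * R * X)) ^ 2 :=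
      pow_le_pow_left₀ (norm_nonneg _) hDelta 2
    have hnorm : ‖w t‖ ^ 2 = ‖w m‖ ^ 2
        + 2 * ⟪w m, c • ∑ j ∈ Icc 1 m, ℓ j • v j⟫
        + ‖c • ∑ j ∈ Icc 1 m, ℓ j • v j‖ ^ 2 := by
      rw [hupd']; exact norm_add_sq_real _ _
    have hin : ⟪w m, c • ∑ j ∈ Icc 1 m, ℓ j • v j⟫ ≤ c * X := by
      rw [real_inner_smul_right, hiw]
      exact mul_le_mul_of_nonneg_left hbound hc.le
    have hcX1 : c * X ≤ 1 := by
      calc c * X ≤ c * (m : ℝ) := mul_le_mul_of_nonneg_left hXm hc.le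
        _ = 1 := hcm
    have hcX0 : 0 ≤ c * X := mul_nonneg hc.le hX0
    have hR2 : (0 : ℝ) ≤ R ^ 2 := sq_nonneg R
    have hD4 : (c * (2 * R * X)) ^ 2 ≤ 4 * R ^ 2 * (c * X) := by
      nlinarith [mul_nonneg hR2 (mul_nonneg hcX0 (sub_nonneg.2 hcX1))]
    have hexp : (4 * R ^ 2 + 2) * (c * X) = 4 * R ^ 2 * (c * X) + 2 * (c * X) := by ring
    rw [hnorm, hexp]
    linarith [hin, hDelta2, hD4]

theorem stmt_9 {d n : ℕ} (R γ : ℝ) (hγ : 0 < γ)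
    (x : ℕ → EuclideanSpace ℝ (Fin d)) (y : ℕ → ℝ)
    (hy : ∀ t, y t = 1 ∨ y t = -1)
    (hR : ∀ t, 1 ≤ t → t ≤ n → ‖x t‖ ≤ R)
    (u : EuclideanSpace ℝ (Fin d)) (hu : ‖u‖ = 1)
    (w : ℕ → EuclideanSpace ℝ (Fin d)) (hw0 : w 0 = 0)
    (hupd : ∀ t, 1 ≤ t →
      w t = w (t - 1) + (1 / ((t : ℝ) - 1)) •
        ∑ j ∈ Icc 1 (t - 1), oamLoss w x y t j • ((y t) • (x t - x j)))
    (M Mstar : ℝ)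
    (hM : M = ∑ t ∈ Icc 2 n, (1 / ((t : ℝ) - 1)) * ∑ j ∈ Icc 1 (t - 1), oamLoss w x y t j)
    (hMstar : Mstar =
      ∑ t ∈ Icc 2 n, (1 / ((t : ℝ) - 1)) * ∑ j ∈ Icc 1 (t - 1), hingeLoss u γ x y t j) :
    M ≤ ((Real.sqrt (4 * R ^ 2 + 2) + Real.sqrt (γ * Mstar)) / γ) ^ 2 ∧
      (Mstar = 0 → M ≤ (4 * R ^ 2 + 2) / γ ^ 2) := by
  have hM0 : 0 ≤ M := by
    rw [hM]
    refine sum_nonneg fun t ht => ?_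
    rw [mem_Icc] at ht
    have h2t : (2 : ℝ) ≤ (t : ℝ) := by exact_mod_cast ht.1
    exact mul_nonneg (one_div_nonneg.2 (by linarith)) (sum_nonneg fun j _ => oamLoss_nonneg w x y t j)
  have hMs0 : 0 ≤ Mstar := by
    rw [hMstar]
    refine sum_nonneg fun t ht => ?_
    rw [mem_Icc] at ht
    have h2t : (2 : ℝ) ≤ (t : ℝ) := by exact_mod_cast ht.1
    exact mul_nonneg (one_div_nonneg.2 (by linarith)) (sum_nonneg fun j _ => hingeLoss_nonneg u γ x y t j)
  -- key inequality : γ M - M* ≤ sqrt((4R²+2) M)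
  have hkey : γ * M - Mstar ≤ Real.sqrt ((4 * R ^ 2 + 2) * M) := by
    rcases lt_or_ge n 2 with hn | hn
    · have he : Icc 2 n = (∅ : Finset ℕ) := Icc_eq_empty (by omega)
      have hM' : M = 0 := by rw [hM, he, sum_empty]
      have hMs' : Mstar = 0 := by rw [hMstar, he, sum_empty]
      rw [hM', hMs']
      simpa using Real.sqrt_nonneg ((4 * R ^ 2 + 2) * 0)
    · -- induction up to n
      have key : ∀ m, 1 ≤ m → m ≤ n →
          γ * (∑ t ∈ Icc 2 m, (1 / ((t : ℝ) - 1)) * ∑ j ∈ Icc 1 (t - 1), oamLoss w x y t j)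
            - (∑ t ∈ Icc 2 m, (1 / ((t : ℝ) - 1)) * ∑ j ∈ Icc 1 (t - 1), hingeLoss u γ x y t j)
            ≤ ⟪u, w m⟫ ∧
          ‖w m‖ ^ 2 ≤ (4 * R ^ 2 + 2) *
            (∑ t ∈ Icc 2 m, (1 / ((t : ℝ) - 1)) * ∑ j ∈ Icc 1 (t - 1), oamLoss w x y t j) := by
        intro m
        induction m with
        | zero => intro h; exact absurd h (by norm_num)
        | succ m ih =>
          intro _ h2
          by_cases hm : m = 0
          · subst hm
            have hw1 : w 1 = 0 := by
              have h := hupd 1 le_rfl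
              simpa [hw0] using h
            have he : Icc 2 1 = (∅ : Finset ℕ) := Icc_eq_empty (by omega)
            rw [he]
            simp [hw1]
          · have hm1 : 1 ≤ m := Nat.one_le_iff_ne_zero.2 hm
            obtain ⟨ihA, ihB⟩ := ih hm1 (by omega)
            have ht2 : 2 ≤ m + 1 := by omega
            have hstep := step_bound R γ x y hy u w (m + 1) ht2
              (fun j hj1 hj2 => hR j hj1 (by omega)) (hupd (m + 1) (by omega))
            have hmm : (m + 1) - 1 = m := rfl
            rw [hmm] at hstep
            obtain ⟨hs1, hs2⟩ := hstep
            constructor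
            · rw [Finset.sum_Icc_succ_top ht2, Finset.sum_Icc_succ_top ht2]
              simp only [hmm]
              nlinarith [ihA, hs1]
            · rw [Finset.sum_Icc_succ_top ht2]
              simp only [hmm]
              nlinarith [ihB, hs2]
      obtain ⟨k1, k2⟩ := key n (by omega) le_rfl
      rw [← hM, ← hMstar] at k1
      rw [← hM] at k2
      have h1 : ⟪u, w n⟫ ≤ ‖w n‖ := by
        calc ⟪u, w n⟫ ≤ ‖u‖ * ‖w n‖ := real_inner_le_norm u (w n)
          _ = ‖w n‖ := by rw [hu, one_mul]
      have h2 : ‖w n‖ ≤ Real.sqrt ((4 * R ^ 2 + 2) * M) := by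
        have : ‖w n‖ = Real.sqrt (‖w n‖ ^ 2) := (Real.sqrt_sq (norm_nonneg _)).symm
        rw [this]
        exact Real.sqrt_le_sqrt k2
      linarith
  -- final algebra
  have hpos : (0 : ℝ) ≤ 4 * R ^ 2 + 2 := by positivity
  set A := Real.sqrt (4 * R ^ 2 + 2) with hAdef
  set B := Real.sqrt (γ * Mstar) with hBdef
  set s := Real.sqrt M with hsdef
  have hA0 : 0 ≤ A := Real.sqrt_nonneg _
  have hB0 : 0 ≤ B := Real.sqrt_nonneg _
  have hs0 : 0 ≤ s := Real.sqrt_nonneg _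
  have hA2 : A ^ 2 = 4 * R ^ 2 + 2 := Real.sq_sqrt hpos
  have hB2 : B ^ 2 = γ * Mstar := Real.sq_sqrt (mul_nonneg hγ.le hMs0)
  have hs2 : s ^ 2 = M := Real.sq_sqrt hM0
  have hApos : 0 < A := Real.sqrt_pos.2 (by positivity)
  have hsqrtAs : Real.sqrt ((4 * R ^ 2 + 2) * M) = A * s := by
    rw [hAdef, hsdef, Real.sqrt_mul hpos]
  rw [hsqrtAs] at hkey
  have hkey' : γ * s ^ 2 - Mstar ≤ A * s := by rw [hs2]; exact hkey
  have hmain : M ≤ ((A + B) / γ) ^ 2 := by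
    have hgs : γ * s ≤ A + B := by
      by_contra hlt
      push_neg at hlt
      have hq : 0 < γ * s := lt_of_le_of_lt (add_nonneg hA0 hB0) hlt
      nlinarith [mul_lt_mul_of_pos_left hlt hq, mul_le_mul_of_nonneg_left hlt.le hB0]
    have : (γ * s) ^ 2 ≤ (A + B) ^ 2 :=
      pow_le_pow_left₀ (mul_nonneg hγ.le hs0) hgs 2
    rw [div_pow]
    rw [le_div_iff₀ (by positivity : (0:ℝ) < γ ^ 2)]
    nlinarith [this]
  refine ⟨hmain, fun h0 => ?_⟩
  have hB0' : B = 0 := by rw [hBdef, h0, mul_zero, Real.sqrt_zero]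
  have := hmain
  rw [hB0', add_zero, div_pow, hA2] at this
  exact this
end

section
/- Let K ⊆ 𝕊⁺_d (the symmetric positive semi-definite d×d real matrices with Frobenius inner product) be convex, closed, non-empty and bounded with sup_{A,B∈K} ‖A − B‖_F ≤ U. Suppose at each round t = 1,…,T a convex differentiable loss ℓ_t : 𝕊⁺_d → ℝ₊ is given with ‖∇ℓ_t(A_t)‖_F ≤ D along the trajectory. Consider the online learner A_{t+1} = P_K[ A_t − η ∇ℓ_t(A_t) ], where P_K is the projection onto K in Frobenius norm and A₁ ∈ K. If η = (U/D)·√(1/T), then Σ_{t=1}^T ℓ_t(A_t) − inf_{B∈K} Σ_{t=1}^T ℓ_t(B) ≤ U·D·√T. -/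
open Finset Real

/-- The Frobenius inner product `⟨X, Y⟩ = Tr(Xᵀ Y)` on `d×d` real matrices. -/
noncomputable def fInner {d : ℕ} (A B : Matrix (Fin d) (Fin d) ℝ) : ℝ :=
  (A.transpose * B).trace

/-- The Frobenius norm `‖X‖_F = √⟨X, X⟩`. -/
noncomputable def fNorm {d : ℕ} (A : Matrix (Fin d) (Fin d) ℝ) : ℝ :=
  Real.sqrt (fInner A A)

/-!
Convexity gives `ℓ t (A t) - ℓ t B ≤ ⟪g t, A t - B⟫`, and since the projection onto `K` does not
increase distances to points of `K`,
`‖A (t+1) - B‖² ≤ ‖A t - B‖² - 2η ⟪g t, A t - B⟫ + η² ‖g t‖²`.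
Summing over `t`, the distances telescope and the regret against `B` is at most
`U² / (2η) + η T D² / 2`, which equals `U D √T` for the given `η`. The Frobenius inner product
makes square matrices a real inner product space, in which this argument runs.
-/

open scoped RealInnerProductSpace

lemma ConvexOn.le_sub_of_hasDerivAt_lineMap {E : Type*} [AddCommGroup E] [Module ℝ E]
    {S : Set E} {f : E → ℝ} (hf : ConvexOn ℝ S f) {x y : E} (hx : x ∈ S) (hy : y ∈ S) {f' : ℝ}
    (hf' : HasDerivAt (fun s : ℝ => f (x + s • (y - x))) f' 0) :
    f' ≤ f y - f x := by
  let L : ℝ →ᵃ[ℝ] E := AffineMap.lineMap x y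
  have hL : ∀ s, L s = x + s • (y - x) := fun s => by
    simp [L, AffineMap.lineMap_apply_module', add_comm]
  have hconv : ConvexOn ℝ (L ⁻¹' S) (fun s => f (x + s • (y - x))) := by
    simpa only [Function.comp_def, hL] using hf.comp_affineMap L
  have := hconv.le_slope_of_hasDerivAt (x := 0) (y := 1) (by simpa [hL] using hx)
    (by simpa [hL] using hy) one_pos hf'
  simpa [slope_def_field] using this

section NearestPoint

variable {E : Type*} [NormedAddCommGroup E] [InnerProductSpace ℝ E]

def IsNearestPointMap (K : Set E) (P : E → E) : Prop :=
  ∀ v, P v ∈ K ∧ ∀ w ∈ K, ‖v - P v‖ ≤ ‖v - w‖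

variable {K : Set E} {P : E → E}

lemma IsNearestPointMap.inner_sub_le_zero (hK : Convex ℝ K) (hP : IsNearestPointMap K P)
    (v : E) {w : E} (hw : w ∈ K) : ⟪v - P v, w - P v⟫ ≤ 0 := by
  have : Nonempty K := ⟨⟨w, hw⟩⟩
  refine (norm_eq_iInf_iff_real_inner_le_zero hK (hP v).1).1 ?_ w hw
  exact le_antisymm (le_ciInf fun w => (hP v).2 w w.2)
    (ciInf_le ⟨0, Set.forall_mem_range.2 fun _ => norm_nonneg _⟩ (⟨P v, (hP v).1⟩ : K))

lemma IsNearestPointMap.norm_sub_le (hK : Convex ℝ K) (hP : IsNearestPointMap K P)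
    (v : E) {w : E} (hw : w ∈ K) : ‖P v - w‖ ≤ ‖v - w‖ := by
  have hinner : 0 ≤ ⟪v - P v, P v - w⟫ := by
    rw [← neg_sub w, inner_neg_right]
    linarith [hP.inner_sub_le_zero hK v hw]
  have hsq : ‖v - w‖ ^ 2 = ‖v - P v‖ ^ 2 + 2 * ⟪v - P v, P v - w⟫ + ‖P v - w‖ ^ 2 := by
    rw [← norm_add_sq_real, sub_add_sub_cancel]
  refine pow_le_pow_iff_left₀ (norm_nonneg _) (norm_nonneg _) two_ne_zero |>.1 ?_
  nlinarith [sq_nonneg ‖v - P v‖]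

lemma IsNearestPointMap.inner_le_of_gradient_step (hK : Convex ℝ K)
    (hP : IsNearestPointMap K P) {η : ℝ} (hη : 0 < η) (a g : E) {w : E} (hw : w ∈ K) :
    ⟪g, a - w⟫ ≤ (‖a - w‖ ^ 2 - ‖P (a - η • g) - w‖ ^ 2) / (2 * η) + η / 2 * ‖g‖ ^ 2 := by
  have hstep : ‖P (a - η • g) - w‖ ^ 2 ≤ ‖a - w‖ ^ 2 - 2 * η * ⟪g, a - w⟫ + η ^ 2 * ‖g‖ ^ 2 := by
    calc ‖P (a - η • g) - w‖ ^ 2 ≤ ‖(a - w) - η • g‖ ^ 2 := by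
          rw [sub_right_comm]
          gcongr
          exact hP.norm_sub_le hK _ hw
      _ = _ := by
          rw [norm_sub_sq_real, inner_smul_right, norm_smul, real_inner_comm, Real.norm_eq_abs,
            abs_of_pos hη]
          ring
  rw [div_add' _ _ _ (by positivity), le_div_iff₀ (by positivity)]
  nlinarith

end NearestPoint

lemma Finset.sum_Icc_one_sub_succ {M : Type*} [AddCommGroup M] (f : ℕ → M) (T : ℕ) :
    ∑ t ∈ Icc 1 T, (f t - f (t + 1)) = f 1 - f (T + 1) := by
  induction T with
  | zero => simp
  | succ T ih => rw [Finset.sum_Icc_succ_top (by omega), ih]; abel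

section OnlineGradientDescent

variable {E : Type*} [NormedAddCommGroup E] [InnerProductSpace ℝ E]

theorem regret_le_of_projected_gradient_descent {K S : Set E} (hK : Convex ℝ K) (hKS : K ⊆ S)
    {P : E → E} (hP : IsNearestPointMap K P) {ℓ : ℕ → E → ℝ} (hℓ : ∀ t, ConvexOn ℝ S (ℓ t))
    {η : ℝ} (hη : 0 < η) {A g : ℕ → E}
    (hgrad : ∀ t v, HasDerivAt (fun s : ℝ => ℓ t (A t + s • v)) ⟪g t, v⟫ 0)
    (hupd : ∀ t, A (t + 1) = P (A t - η • g t)) {B : E} (hB : B ∈ K) (T : ℕ) :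
    ∑ t ∈ Icc 1 T, (ℓ t (A t) - ℓ t B)
      ≤ ‖A 1 - B‖ ^ 2 / (2 * η) + η / 2 * ∑ t ∈ Icc 1 T, ‖g t‖ ^ 2 := by
  have hAK : ∀ t, 1 ≤ t → A t ∈ K := by
    rintro (_ | t) ht
    · omega
    · exact hupd t ▸ (hP _).1
  have hstep : ∀ t ∈ Icc 1 T,
      ℓ t (A t) - ℓ t B
        ≤ (‖A t - B‖ ^ 2 - ‖A (t + 1) - B‖ ^ 2) / (2 * η) + η / 2 * ‖g t‖ ^ 2 := by
    intro t ht
    have hconv := (hℓ t).le_sub_of_hasDerivAt_lineMap (hKS (hAK t (mem_Icc.1 ht).1)) (hKS hB)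
      (hgrad t (B - A t))
    have hdesc := hP.inner_le_of_gradient_step hK hη (A t) (g t) hB
    rw [← hupd t] at hdesc
    rw [← neg_sub, inner_neg_right] at hconv
    linarith
  calc ∑ t ∈ Icc 1 T, (ℓ t (A t) - ℓ t B)
      ≤ ∑ t ∈ Icc 1 T,
          ((‖A t - B‖ ^ 2 - ‖A (t + 1) - B‖ ^ 2) / (2 * η) + η / 2 * ‖g t‖ ^ 2) :=
        sum_le_sum hstep
    _ = (‖A 1 - B‖ ^ 2 - ‖A (T + 1) - B‖ ^ 2) / (2 * η) + η / 2 * ∑ t ∈ Icc 1 T, ‖g t‖ ^ 2 := by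
      rw [sum_add_distrib, ← sum_div, sum_Icc_one_sub_succ (fun t => ‖A t - B‖ ^ 2), mul_sum]
    _ ≤ ‖A 1 - B‖ ^ 2 / (2 * η) + η / 2 * ∑ t ∈ Icc 1 T, ‖g t‖ ^ 2 := by
      gcongr
      exact sub_le_self _ (sq_nonneg _)

end OnlineGradientDescent

noncomputable abbrev fInnerCore (d : ℕ) :
    InnerProductSpace.Core ℝ (Matrix (Fin d) (Fin d) ℝ) where
  inner := fInner
  conj_inner_symm A B := by
    rw [conj_trivial, fInner, fInner, ← Matrix.trace_transpose, Matrix.transpose_mul,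
      Matrix.transpose_transpose]
  re_inner_nonneg A := by
    simpa [fInner, Matrix.conjTranspose_eq_transpose_of_trivial] using
      (Matrix.posSemidef_conjTranspose_mul_self A).trace_nonneg
  add_left A B C := by simp [fInner, Matrix.add_mul]
  smul_left A B r := by simp [fInner]
  definite A h := by
    rwa [fInner, ← Matrix.conjTranspose_eq_transpose_of_trivial,
      Matrix.trace_conjTranspose_mul_self_eq_zero_iff] at h

noncomputable abbrev fInnerNormedAddCommGroup (d : ℕ) :
    NormedAddCommGroup (Matrix (Fin d) (Fin d) ℝ) :=
  (fInnerCore d).toNormedAddCommGroup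

noncomputable abbrev fInnerProductSpace (d : ℕ) :
    letI := fInnerNormedAddCommGroup d
    InnerProductSpace ℝ (Matrix (Fin d) (Fin d) ℝ) :=
  InnerProductSpace.ofCore (fInnerCore d).toCore

theorem stmt_13_general {d T : ℕ} (hT : 1 ≤ T) (U D : ℝ) (hU : 0 < U) (hD : 0 < D)
    (K : Set (Matrix (Fin d) (Fin d) ℝ))
    (hKpsd : ∀ A ∈ K, A.PosSemidef)
    (hKconv : Convex ℝ K)
    (hKbdd : ∀ A ∈ K, ∀ B ∈ K, fNorm (A - B) ≤ U)
    (ℓ : ℕ → Matrix (Fin d) (Fin d) ℝ → ℝ)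
    (hℓconv : ∀ t, ConvexOn ℝ {A : Matrix (Fin d) (Fin d) ℝ | A.PosSemidef} (ℓ t))
    -- `g t A` is the (Gateaux) gradient of `ℓ t` at `A` w.r.t. the Frobenius inner product
    (g : ℕ → Matrix (Fin d) (Fin d) ℝ → Matrix (Fin d) (Fin d) ℝ)
    (hgrad : ∀ t A V, HasDerivAt (fun s : ℝ => ℓ t (A + s • V)) (fInner (g t A) V) 0)
    -- the projection onto `K` in Frobenius norm
    (proj : Matrix (Fin d) (Fin d) ℝ → Matrix (Fin d) (Fin d) ℝ)
    (hproj : ∀ V, proj V ∈ K ∧ ∀ B ∈ K, fNorm (V - proj V) ≤ fNorm (V - B))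
    (η : ℝ) (hη : η = (U / D) * Real.sqrt (1 / T))
    (A : ℕ → Matrix (Fin d) (Fin d) ℝ)
    (hupd : ∀ t, A (t + 1) = proj (A t - η • g t (A t)))
    (hgradbdd : ∀ t ∈ Icc 1 T, fNorm (g t (A t)) ≤ D) :
    ∑ t ∈ Icc 1 T, ℓ t (A t) - ⨅ B : K, ∑ t ∈ Icc 1 T, ℓ t (B : Matrix (Fin d) (Fin d) ℝ) ≤
      U * D * Real.sqrt T := by
  -- Under these structures `⟪A, B⟫` and `‖A‖` unfold to `fInner A B` and `fNorm A`, so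
  -- `hgrad`, `hproj`, `hKbdd` and `hgradbdd` apply unchanged.
  let := fInnerNormedAddCommGroup d
  let := fInnerProductSpace d
  have hTpos : (0 : ℝ) < T := by exact_mod_cast hT
  have hηpos : 0 < η := by rw [hη]; positivity
  have hA1 : A 1 ∈ K := hupd 0 ▸ (hproj _).1
  have hregret : ∀ B ∈ K, ∑ t ∈ Icc 1 T, ℓ t (A t) - ∑ t ∈ Icc 1 T, ℓ t B ≤ U * D * √T := by
    intro B hB
    have hgrad_sq : ∑ t ∈ Icc 1 T, ‖g t (A t)‖ ^ 2 ≤ T * D ^ 2 := by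
      simpa using sum_le_card_nsmul _ _ _ fun t ht =>
        pow_le_pow_left₀ (norm_nonneg _) (hgradbdd t ht) 2
    calc _ = ∑ t ∈ Icc 1 T, (ℓ t (A t) - ℓ t B) := (sum_sub_distrib _ _).symm
      _ ≤ ‖A 1 - B‖ ^ 2 / (2 * η) + η / 2 * ∑ t ∈ Icc 1 T, ‖g t (A t)‖ ^ 2 :=
        regret_le_of_projected_gradient_descent hKconv hKpsd hproj hℓconv hηpos
          (fun t => hgrad t (A t)) hupd hB T
      _ ≤ U ^ 2 / (2 * η) + η / 2 * (T * D ^ 2) := by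
        gcongr
        exact hKbdd _ hA1 _ hB
      _ = U * D * √T := by
        rw [hη, one_div, Real.sqrt_inv]
        field_simp
        rw [Real.sq_sqrt hTpos.le]
        ring
  have : Nonempty K := ⟨⟨A 1, hA1⟩⟩
  exact sub_le_comm.1 (le_ciInf fun B => sub_le_comm.1 (hregret B B.2))

theorem stmt_13 {d T : ℕ} (hT : 1 ≤ T) (U D : ℝ) (hU : 0 < U) (hD : 0 < D)
    (K : Set (Matrix (Fin d) (Fin d) ℝ))
    (hKpsd : ∀ A ∈ K, A.PosSemidef)
    (hKconv : Convex ℝ K) (hKclosed : IsClosed K) (hKne : K.Nonempty)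
    (hKbdd : ∀ A ∈ K, ∀ B ∈ K, fNorm (A - B) ≤ U)
    (ℓ : ℕ → Matrix (Fin d) (Fin d) ℝ → ℝ)
    (hℓnonneg : ∀ t, ∀ A, A.PosSemidef → 0 ≤ ℓ t A)
    (hℓconv : ∀ t, ConvexOn ℝ {A : Matrix (Fin d) (Fin d) ℝ | A.PosSemidef} (ℓ t))
    -- `g t A` is the (Gateaux) gradient of `ℓ t` at `A` w.r.t. the Frobenius inner product
    (g : ℕ → Matrix (Fin d) (Fin d) ℝ → Matrix (Fin d) (Fin d) ℝ)
    (hgrad : ∀ t A V, HasDerivAt (fun s : ℝ => ℓ t (A + s • V)) (fInner (g t A) V) 0)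
    -- the projection onto `K` in Frobenius norm
    (proj : Matrix (Fin d) (Fin d) ℝ → Matrix (Fin d) (Fin d) ℝ)
    (hproj : ∀ V, proj V ∈ K ∧ ∀ B ∈ K, fNorm (V - proj V) ≤ fNorm (V - B))
    (η : ℝ) (hη : η = (U / D) * Real.sqrt (1 / T))
    (A : ℕ → Matrix (Fin d) (Fin d) ℝ) (hA1 : A 1 ∈ K)
    (hupd : ∀ t, A (t + 1) = proj (A t - η • g t (A t)))
    (hgradbdd : ∀ t ∈ Icc 1 T, fNorm (g t (A t)) ≤ D) :
    ∑ t ∈ Icc 1 T, ℓ t (A t) - ⨅ B : K, ∑ t ∈ Icc 1 T, ℓ t (B : Matrix (Fin d) (Fin d) ℝ) ≤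
      U * D * Real.sqrt T :=
  stmt_13_general hT U D hU hD K hKpsd hKconv hKbdd ℓ hℓconv g hgrad proj hproj η hη A hupd hgradbdd
end

section
/- Let (x_t, y_t) ∈ ℝ^d × {−1,+1}, t = 1,…,n, be an arbitrary sequence with max_t ‖x_t‖ ≤ R, and let u be any unit vector and γ > 0. Run the finite-buffer online AUC maximization algorithm with FIFO buffer: w₀ = 0 and w_t = w_{t−1} + (1/|ℬ_{t−1}|) Σ_{j∈ℬ_{t−1}} ℓ_j^t · y_t(x_t − x_j), where ℓ_j^t = min([1 − ⟨w_{t−1}, y_t(x_t − x_j)⟩]₊, 1)·𝟙[y_t ≠ y_j]. Define M_ℬ = Σ_{t=2}^n (1/|ℬ_{t−1}|) Σ_{j∈ℬ_{t−1}} ℓ_j^t and M_ℬ* = Σ_{t=2}^n (1/|ℬ_{t−1}|) Σ_{j∈ℬ_{t−1}} ℓ̂_j^t(u), where ℓ̂_j^t(u) = 𝟙[y_t ≠ y_j]·[γ − ⟨u, (1/2)(y_t − y_j)(x_t − x_j)⟩]₊. Then M_ℬ ≤ ( (√(4R² + 2) + √(γ M_ℬ*)) / γ )². -/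
open Finset Real
open scoped RealInnerProductSpace

/-- The FIFO buffer `ℬ_t` of maximal size `B`: the most recent `min(t−1, B)` indices
among `1,…,t−1`. -/
def Bset (B t : ℕ) : Finset ℕ := Finset.Ioc (t - 1 - min (t - 1) B) (t - 1)

lemma pairA {d : ℕ} (w x : ℕ → EuclideanSpace ℝ (Fin d)) (y : ℕ → ℝ)
    (hy : ∀ t, y t = 1 ∨ y t = -1) (u : EuclideanSpace ℝ (Fin d)) (γ : ℝ) (t j : ℕ) :
    γ * oamLoss w x y t j - hingeLoss u γ x y t j
      ≤ oamLoss w x y t j * ⟪u, (y t) • (x t - x j)⟫ := by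
  by_cases h : y t = y j
  · simp [oamLoss, hingeLoss, h]
  · have hyt : ((y t - y j) / 2) = y t := by
      rcases hy t with h1 | h1 <;> rcases hy j with h2 | h2
      · exact absurd (h1.trans h2.symm) h
      · rw [h1, h2]; norm_num
      · rw [h1, h2]; norm_num
      · exact absurd (h1.trans h2.symm) h
    have hℓ0 : 0 ≤ oamLoss w x y t j := oamLoss_nonneg w x y t j
    have hℓ1 : oamLoss w x y t j ≤ 1 := oamLoss_le_one w x y t j
    have hHdef : hingeLoss u γ x y t j = max (γ - ⟪u, (y t) • (x t - x j)⟫) 0 := by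
      rw [hingeLoss, if_neg h, hyt]
    rw [hHdef]
    set ip := ⟪u, (y t) • (x t - x j)⟫ with hip
    have h1 : γ - ip ≤ max (γ - ip) 0 := le_max_left _ _
    have h2 : (0:ℝ) ≤ max (γ - ip) 0 := le_max_right _ _
    nlinarith [mul_le_mul_of_nonneg_left h1 hℓ0,
      mul_nonneg (by linarith : (0:ℝ) ≤ 1 - oamLoss w x y t j) h2]

lemma pairB {d : ℕ} (w x : ℕ → EuclideanSpace ℝ (Fin d)) (y : ℕ → ℝ) (t j : ℕ) :
    oamLoss w x y t j * ⟪w (t - 1), (y t) • (x t - x j)⟫ ≤ oamLoss w x y t j := by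
  by_cases h : y t = y j
  · simp [oamLoss, h]
  · set s := ⟪w (t - 1), (y t) • (x t - x j)⟫ with hs
    have hℓ : oamLoss w x y t j = min (max (1 - s) 0) 1 := by rw [oamLoss, if_neg h]
    rw [hℓ]
    rcases le_or_gt s 1 with h1 | h1
    · have h0 : (0:ℝ) ≤ min (max (1 - s) 0) 1 := le_min (le_max_right _ _) zero_le_one
      nlinarith
    · have hm : max (1 - s) 0 = 0 := max_eq_right (by linarith)
      rw [hm]; simp

noncomputable def avgL {d : ℕ} (w x : ℕ → EuclideanSpace ℝ (Fin d)) (y : ℕ → ℝ)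
    (B t : ℕ) : ℝ :=
  (1 / ((Bset B (t - 1)).card : ℝ)) * ∑ j ∈ Bset B (t - 1), oamLoss w x y t j

noncomputable def avgH {d : ℕ} (u : EuclideanSpace ℝ (Fin d)) (γ : ℝ)
    (x : ℕ → EuclideanSpace ℝ (Fin d)) (y : ℕ → ℝ) (B t : ℕ) : ℝ :=
  (1 / ((Bset B (t - 1)).card : ℝ)) * ∑ j ∈ Bset B (t - 1), hingeLoss u γ x y t j

lemma avgL_nonneg {d : ℕ} (w x : ℕ → EuclideanSpace ℝ (Fin d)) (y : ℕ → ℝ) (B t : ℕ) :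
    0 ≤ avgL w x y B t := by
  apply mul_nonneg (by positivity)
  exact Finset.sum_nonneg fun j _ => oamLoss_nonneg w x y t j

lemma avgL_le_one {d : ℕ} (w x : ℕ → EuclideanSpace ℝ (Fin d)) (y : ℕ → ℝ) (B t : ℕ) :
    avgL w x y B t ≤ 1 := by
  unfold avgL
  rcases Nat.eq_zero_or_pos (Bset B (t - 1)).card with h | h
  · rw [Finset.card_eq_zero] at h
    simp [h]
  · have hsum : ∑ j ∈ Bset B (t - 1), oamLoss w x y t j ≤ ((Bset B (t - 1)).card : ℝ) := by
      calc ∑ j ∈ Bset B (t - 1), oamLoss w x y t j ≤ ∑ _j ∈ Bset B (t - 1), (1:ℝ) :=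
            Finset.sum_le_sum fun j _ => oamLoss_le_one w x y t j
        _ = ((Bset B (t - 1)).card : ℝ) := by simp
    rw [one_div, inv_mul_le_iff₀ (by exact_mod_cast h), mul_one]
    exact hsum

lemma avgH_nonneg {d : ℕ} (u : EuclideanSpace ℝ (Fin d)) (γ : ℝ)
    (x : ℕ → EuclideanSpace ℝ (Fin d)) (y : ℕ → ℝ) (B t : ℕ) :
    0 ≤ avgH u γ x y B t := by
  apply mul_nonneg (by positivity)
  exact Finset.sum_nonneg fun j _ => hingeLoss_nonneg u γ x y t j

lemma innerStep {d B : ℕ} (γ : ℝ) (x : ℕ → EuclideanSpace ℝ (Fin d)) (y : ℕ → ℝ)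
    (hy : ∀ t, y t = 1 ∨ y t = -1) (u : EuclideanSpace ℝ (Fin d))
    (w : ℕ → EuclideanSpace ℝ (Fin d))
    (hupd : ∀ t, 1 ≤ t → w t = w (t - 1) + (1 / ((Bset B (t - 1)).card : ℝ)) •
        ∑ j ∈ Bset B (t - 1), oamLoss w x y t j • ((y t) • (x t - x j)))
    (t : ℕ) (ht1 : 1 ≤ t) :
    ⟪u, w (t - 1)⟫ + (γ * avgL w x y B t - avgH u γ x y B t) ≤ ⟪u, w t⟫ := by
  rw [hupd t ht1, inner_add_right]
  have hc0 : (0:ℝ) ≤ 1 / ((Bset B (t - 1)).card : ℝ) := by positivity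
  have hrw : ⟪u, (1 / ((Bset B (t - 1)).card : ℝ)) •
      ∑ j ∈ Bset B (t - 1), oamLoss w x y t j • ((y t) • (x t - x j))⟫
      = (1 / ((Bset B (t - 1)).card : ℝ)) *
        ∑ j ∈ Bset B (t - 1), oamLoss w x y t j * ⟪u, (y t) • (x t - x j)⟫ := by
    rw [real_inner_smul_right, inner_sum]
    congr 1
    exact Finset.sum_congr rfl fun j _ => real_inner_smul_right _ _ _
  rw [hrw]
  have h1 : ∑ j ∈ Bset B (t - 1), (γ * oamLoss w x y t j - hingeLoss u γ x y t j)
      ≤ ∑ j ∈ Bset B (t - 1), oamLoss w x y t j * ⟪u, (y t) • (x t - x j)⟫ :=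
    Finset.sum_le_sum fun j _ => pairA w x y hy u γ t j
  have h2 := mul_le_mul_of_nonneg_left h1 hc0
  have h3 : γ * avgL w x y B t - avgH u γ x y B t
      = (1 / ((Bset B (t - 1)).card : ℝ)) *
        ∑ j ∈ Bset B (t - 1), (γ * oamLoss w x y t j - hingeLoss u γ x y t j) := by
    rw [Finset.sum_sub_distrib, ← Finset.mul_sum]
    unfold avgL avgH; ring
  linarith [h3 ▸ h2]

lemma normStep {d n B : ℕ} (R : ℝ) (hR0 : 0 ≤ R)
    (x : ℕ → EuclideanSpace ℝ (Fin d)) (y : ℕ → ℝ) (hy : ∀ t, y t = 1 ∨ y t = -1)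
    (hR : ∀ t, 1 ≤ t → t ≤ n → ‖x t‖ ≤ R)
    (w : ℕ → EuclideanSpace ℝ (Fin d))
    (hupd : ∀ t, 1 ≤ t → w t = w (t - 1) + (1 / ((Bset B (t - 1)).card : ℝ)) •
        ∑ j ∈ Bset B (t - 1), oamLoss w x y t j • ((y t) • (x t - x j)))
    (t : ℕ) (ht2 : 2 ≤ t) (htn : t ≤ n) :
    ‖w t‖ ^ 2 ≤ ‖w (t - 1)‖ ^ 2 + (4 * R ^ 2 + 2) * avgL w x y B t := by
  have hc0 : (0:ℝ) ≤ 1 / ((Bset B (t - 1)).card : ℝ) := by positivity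
  set c := 1 / ((Bset B (t - 1)).card : ℝ) with hcdef
  set Δ := c • ∑ j ∈ Bset B (t - 1), oamLoss w x y t j • ((y t) • (x t - x j)) with hΔdef
  have hup : w t = w (t - 1) + Δ := hupd t (by omega)
  have hv : ∀ j ∈ Bset B (t - 1), ‖(y t) • (x t - x j)‖ ≤ 2 * R := by
    intro j hj
    have hjmem := Finset.mem_Ioc.mp hj
    have hxj := hR j (by omega) (by omega)
    have hxt := hR t (by omega) htn
    have hsm : ‖(y t) • (x t - x j)‖ = ‖x t - x j‖ := by
      rcases hy t with h | h <;> rw [norm_smul, h] <;> simp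
    rw [hsm]
    calc ‖x t - x j‖ ≤ ‖x t‖ + ‖x j‖ := norm_sub_le _ _
      _ ≤ 2 * R := by linarith
  have hΔn : ‖Δ‖ ≤ 2 * R * avgL w x y B t := by
    rw [hΔdef, norm_smul, Real.norm_eq_abs, abs_of_nonneg hc0]
    have h1 : ‖∑ j ∈ Bset B (t - 1), oamLoss w x y t j • ((y t) • (x t - x j))‖
        ≤ ∑ j ∈ Bset B (t - 1), oamLoss w x y t j * (2 * R) := by
      refine (norm_sum_le _ _).trans (Finset.sum_le_sum fun j hj => ?_)
      rw [norm_smul, Real.norm_eq_abs, abs_of_nonneg (oamLoss_nonneg w x y t j)]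
      exact mul_le_mul_of_nonneg_left (hv j hj) (oamLoss_nonneg w x y t j)
    calc c * ‖∑ j ∈ Bset B (t - 1), oamLoss w x y t j • ((y t) • (x t - x j))‖
        ≤ c * ∑ j ∈ Bset B (t - 1), oamLoss w x y t j * (2 * R) :=
          mul_le_mul_of_nonneg_left h1 hc0
      _ = 2 * R * avgL w x y B t := by rw [← Finset.sum_mul]; unfold avgL; ring
  have hinner : ⟪w (t - 1), Δ⟫ ≤ avgL w x y B t := by
    rw [hΔdef, real_inner_smul_right, inner_sum]
    have hrw : ∑ j ∈ Bset B (t - 1), ⟪w (t - 1), oamLoss w x y t j • ((y t) • (x t - x j))⟫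
        = ∑ j ∈ Bset B (t - 1), oamLoss w x y t j * ⟪w (t - 1), (y t) • (x t - x j)⟫ :=
      Finset.sum_congr rfl fun j _ => real_inner_smul_right _ _ _
    rw [hrw]
    calc c * ∑ j ∈ Bset B (t - 1), oamLoss w x y t j * ⟪w (t - 1), (y t) • (x t - x j)⟫
        ≤ c * ∑ j ∈ Bset B (t - 1), oamLoss w x y t j :=
          mul_le_mul_of_nonneg_left (Finset.sum_le_sum fun j _ => pairB w x y t j) hc0
      _ = avgL w x y B t := rfl
  have hL0 : 0 ≤ avgL w x y B t := avgL_nonneg w x y B t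
  have hL1 : avgL w x y B t ≤ 1 := avgL_le_one w x y B t
  have hsq : ‖Δ‖ ^ 2 ≤ (2 * R * avgL w x y B t) ^ 2 :=
    pow_le_pow_left₀ (norm_nonneg Δ) hΔn 2
  rw [hup, norm_add_sq_real]
  nlinarith [mul_nonneg (mul_nonneg (sq_nonneg R) hL0)
    (by linarith : (0:ℝ) ≤ 1 - avgL w x y B t)]

lemma telescope {d n B : ℕ} (R γ : ℝ) (hR0 : 0 ≤ R)
    (x : ℕ → EuclideanSpace ℝ (Fin d)) (y : ℕ → ℝ) (hy : ∀ t, y t = 1 ∨ y t = -1)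
    (hR : ∀ t, 1 ≤ t → t ≤ n → ‖x t‖ ≤ R)
    (u : EuclideanSpace ℝ (Fin d))
    (w : ℕ → EuclideanSpace ℝ (Fin d)) (hw0 : w 0 = 0)
    (hupd : ∀ t, 1 ≤ t → w t = w (t - 1) + (1 / ((Bset B (t - 1)).card : ℝ)) •
        ∑ j ∈ Bset B (t - 1), oamLoss w x y t j • ((y t) • (x t - x j))) :
    ∀ m, m ≤ n →
      ‖w m‖ ^ 2 ≤ (4 * R ^ 2 + 2) * ∑ t ∈ Finset.Icc 2 m, avgL w x y B t ∧
      γ * (∑ t ∈ Finset.Icc 2 m, avgL w x y B t)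
        - ∑ t ∈ Finset.Icc 2 m, avgH u γ x y B t ≤ ⟪u, w m⟫ := by
  intro m
  induction m with
  | zero =>
    intro _
    simp [hw0]
  | succ m ih =>
    intro hmn
    rcases Nat.eq_zero_or_pos m with hm0 | hm1
    · subst hm0
      have hB0 : Bset B 0 = ∅ := by simp [Bset]
      have hw1 : w 1 = 0 := by
        have := hupd 1 le_rfl
        simp only [Nat.sub_self] at this
        rw [this, hw0, hB0]
        simp
      have hIcc : Finset.Icc 2 1 = (∅ : Finset ℕ) := by decide
      simp [hw1, hIcc]
    · have hm2 : 2 ≤ m + 1 := by omega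
      have h1 := normStep (B := B) R hR0 x y hy hR w hupd (m + 1) hm2 hmn
      have h2 := innerStep (B := B) γ x y hy u w hupd (m + 1) (by omega)
      simp only [Nat.add_sub_cancel] at h1 h2
      obtain ⟨ih1, ih2⟩ := ih (by omega)
      rw [Finset.sum_Icc_succ_top hm2, Finset.sum_Icc_succ_top hm2]
      constructor
      · linarith
      · linarith

lemma quad_bound (γ A Mstar M : ℝ) (hγ : 0 < γ) (hA : 0 ≤ A) (hM : 0 ≤ M)
    (hMs : 0 ≤ Mstar)
    (hkey : γ * M ≤ Real.sqrt A * Real.sqrt M + Mstar) :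
    M ≤ ((Real.sqrt A + Real.sqrt (γ * Mstar)) / γ) ^ 2 := by
  set a := Real.sqrt A with hadef
  set q := Real.sqrt (γ * Mstar) with hqdef
  set s := Real.sqrt M with hsdef
  have ha : 0 ≤ a := Real.sqrt_nonneg _
  have hq : 0 ≤ q := Real.sqrt_nonneg _
  have hs : 0 ≤ s := Real.sqrt_nonneg _
  have hs2 : s ^ 2 = M := Real.sq_sqrt hM
  have hq2 : q ^ 2 = γ * Mstar := Real.sq_sqrt (mul_nonneg hγ.le hMs)
  have hle : s ≤ (a + q) / γ := by
    by_contra hcon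
    push_neg at hcon
    have h' : a + q < γ * s := by
      rwa [div_lt_iff₀ hγ, mul_comm] at hcon
    have hγM : γ * Mstar = q ^ 2 := hq2.symm
    have hkey' : γ * (γ * M) ≤ γ * (a * s + Mstar) :=
      mul_le_mul_of_nonneg_left (by linarith) hγ.le
    have hp : (γ * s) ^ 2 ≤ a * (γ * s) + q ^ 2 := by
      have e1 : γ * (γ * M) = (γ * s) ^ 2 := by rw [← hs2]; ring
      have e2 : γ * (a * s + Mstar) = a * (γ * s) + q ^ 2 := by
        rw [mul_add, hγM]; ring
      linarith [e1 ▸ e2 ▸ hkey']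
    nlinarith [mul_pos (show 0 < γ * s - a by linarith) (show 0 < γ * s - q by linarith),
      mul_nonneg hq (le_of_lt (show 0 < γ * s - a - q by linarith)), hp]
  calc M = s ^ 2 := hs2.symm
    _ ≤ ((a + q) / γ) ^ 2 := by
        apply pow_le_pow_left₀ hs hle


theorem stmt_16 {d n B : ℕ} (hB : 1 ≤ B) (R γ : ℝ) (hγ : 0 < γ)
    (x : ℕ → EuclideanSpace ℝ (Fin d)) (y : ℕ → ℝ)
    (hy : ∀ t, y t = 1 ∨ y t = -1)
    (hR : ∀ t, 1 ≤ t → t ≤ n → ‖x t‖ ≤ R)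
    (u : EuclideanSpace ℝ (Fin d)) (hu : ‖u‖ = 1)
    (w : ℕ → EuclideanSpace ℝ (Fin d)) (hw0 : w 0 = 0)
    (hupd : ∀ t, 1 ≤ t →
      w t = w (t - 1) + (1 / ((Bset B (t - 1)).card : ℝ)) •
        ∑ j ∈ Bset B (t - 1), oamLoss w x y t j • ((y t) • (x t - x j)))
    (MB MBstar : ℝ)
    (hMB : MB = ∑ t ∈ Icc 2 n,
      (1 / ((Bset B (t - 1)).card : ℝ)) * ∑ j ∈ Bset B (t - 1), oamLoss w x y t j)
    (hMBstar : MBstar = ∑ t ∈ Icc 2 n,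
      (1 / ((Bset B (t - 1)).card : ℝ)) * ∑ j ∈ Bset B (t - 1), hingeLoss u γ x y t j) :
    MB ≤ ((Real.sqrt (4 * R ^ 2 + 2) + Real.sqrt (γ * MBstar)) / γ) ^ 2 := by
  rcases lt_or_ge n 2 with hn | hn2
  · have he : Finset.Icc 2 n = ∅ := Finset.Icc_eq_empty (by omega)
    rw [hMB, he, Finset.sum_empty]
    positivity
  · have hR0 : 0 ≤ R := le_trans (norm_nonneg (x 1)) (hR 1 le_rfl (by omega))
    have hMBeq : MB = ∑ t ∈ Finset.Icc 2 n, avgL w x y B t := hMB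
    have hMBseq : MBstar = ∑ t ∈ Finset.Icc 2 n, avgH u γ x y B t := hMBstar
    obtain ⟨h1, h2⟩ := telescope (B := B) R γ hR0 x y hy hR u w hw0 hupd n le_rfl
    rw [← hMBeq] at h1
    rw [← hMBeq, ← hMBseq] at h2
    have hMB0 : 0 ≤ MB := by
      rw [hMBeq]
      exact Finset.sum_nonneg fun t _ => avgL_nonneg w x y B t
    have hMBs0 : 0 ≤ MBstar := by
      rw [hMBseq]
      exact Finset.sum_nonneg fun t _ => avgH_nonneg u γ x y B t
    have hcs : ⟪u, w n⟫ ≤ ‖w n‖ := by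
      calc ⟪u, w n⟫ ≤ ‖u‖ * ‖w n‖ := real_inner_le_norm u (w n)
        _ = ‖w n‖ := by rw [hu, one_mul]
    have hwle : ‖w n‖ ≤ Real.sqrt ((4 * R ^ 2 + 2) * MB) := by
      calc ‖w n‖ = Real.sqrt (‖w n‖ ^ 2) := (Real.sqrt_sq (norm_nonneg _)).symm
        _ ≤ Real.sqrt ((4 * R ^ 2 + 2) * MB) := Real.sqrt_le_sqrt h1
    have hsqrt : Real.sqrt ((4 * R ^ 2 + 2) * MB)
        = Real.sqrt (4 * R ^ 2 + 2) * Real.sqrt MB := Real.sqrt_mul (by positivity) _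
    have hkey : γ * MB ≤ Real.sqrt (4 * R ^ 2 + 2) * Real.sqrt MB + MBstar := by
      rw [hsqrt] at hwle
      linarith
    exact quad_bound γ (4 * R ^ 2 + 2) MBstar MB hγ (by positivity) hMB0 hMBs0 hkey
end
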